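/- arXiv:2206.11210 — 2 statements merged into one kernel-verified Lean document; each statement's English description precedes it below -/
import Mathlib

section
/- Let (X,d) be a metric space, S a finite set of centers, OPT a finite set of k centers, and for each o ∈ OPT let s_o ∈ S be a closest point of S to o; set T' = {s_o : o ∈ OPT}. Then for any point i ∈ X, letting o_i be a closest point of OPT to i and s_i a closest point of S to i, we have d(i, T') ≤ 2·d(i, o_i) + d(i, s_i). -/
theorem stmt_0 {X : Type*} [MetricSpace X] [DecidableEq X]
    (S OPT : Finset X) (hS : S.Nonempty) (hOPT : OPT.Nonempty)
    (sOf : X → X)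
    (hsOf : ∀ o ∈ OPT, sOf o ∈ S ∧ dist o (sOf o) = Metric.infDist o (S : Set X))
    (T' : Finset X) (hT' : T' = OPT.image sOf)
    (i : X) (oi si : X)
    (hoi : oi ∈ OPT) (hoi_min : dist i oi = Metric.infDist i (OPT : Set X))
    (hsi : si ∈ S) (hsi_min : dist i si = Metric.infDist i (S : Set X)) :
    Metric.infDist i (T' : Set X) ≤ 2 * dist i oi + dist i si := by
  have hmem : sOf oi ∈ (T' : Set X) := by
    simp [hT']
    exact ⟨oi, hoi, rfl⟩
  have h1 : Metric.infDist i (T' : Set X) ≤ dist i (sOf oi) :=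
    Metric.infDist_le_dist_of_mem hmem
  have h2 : dist oi (sOf oi) = Metric.infDist oi (S : Set X) := (hsOf oi hoi).2
  have h3 : Metric.infDist oi (S : Set X) ≤ dist oi si :=
    Metric.infDist_le_dist_of_mem (by simpa using hsi)
  calc Metric.infDist i (T' : Set X) ≤ dist i (sOf oi) := h1
    _ ≤ dist i oi + dist oi (sOf oi) := dist_triangle _ _ _
    _ ≤ dist i oi + dist oi si := by rw [h2]; linarith
    _ ≤ dist i oi + (dist oi i + dist i si) := by linarith [dist_triangle oi i si]
    _ ≤ 2 * dist i oi + dist i si := by rw [dist_comm oi i]; linarith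
end

section
/- Let (X,d) be a metric space and let (j_1,j'_1),…,(j_ℓ,j'_ℓ) be pairs of points such that for every b, j_b lies outside the open ball of radius d(j_z, j'_z) around j_z for all z < b. Assume additionally that for all b, d(j_b, j'_b) ≤ d(j_b, j'_z) for all z. Then for any z < w ≤ ℓ, the open balls B(j_z, d(j_z,j'_z)/3) and B(j_w, d(j_w,j'_w)/3) are disjoint. -/
theorem stmt_7 {X : Type*} [MetricSpace X] (ℓ : ℕ)
    (j j' : Fin ℓ → X)
    (hout : ∀ b z : Fin ℓ, z < b → j b ∉ Metric.ball (j z) (dist (j z) (j' z)))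
    (hnear : ∀ b z : Fin ℓ, dist (j b) (j' b) ≤ dist (j b) (j' z)) :
    ∀ z w : Fin ℓ, z < w →
      Disjoint (Metric.ball (j z) (dist (j z) (j' z) / 3))
               (Metric.ball (j w) (dist (j w) (j' w) / 3)) := by
  intro z w hzw
  have h1 : dist (j z) (j' z) ≤ dist (j z) (j w) := by
    have := hout w z hzw
    simp [Metric.mem_ball, dist_comm] at this
    linarith [this]
  have h2 : dist (j w) (j' w) ≤ dist (j w) (j' z) := hnear w z
  have h3 : dist (j w) (j' z) ≤ dist (j w) (j z) + dist (j z) (j' z) := dist_triangle _ _ _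
  apply Metric.ball_disjoint_ball
  have := dist_comm (j z) (j w)
  linarith
end
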